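/- arXiv:1403.3739 — 7 statements merged into one kernel-verified Lean document; each statement's English description precedes it below -/
import Mathlib

section
/- Let □axby and □a'x'b'y' be quadrangles in the Euclidean plane with equal corresponding side lengths, i.e. dist a x = dist a' x', dist x b = dist x' b', dist b y = dist b' y', dist y a = dist y' a'. If α(□axby) = α(□a'x'b'y'), then the diagonals are equal: dist a b = dist a' b'. -/
open EuclideanGeometry

/-- The plane ℝ². -/
abbrev Plane := EuclideanSpace ℝ (Fin 2)

/-- Area of the triangle △pqr, with the angle taken at the middle vertex q. -/
noncomputable def triArea (p q r : Plane) : ℝ :=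
  1 / 2 * dist q p * dist q r * Real.sin (∠ p q r)

/-- `□axby` is a quadrangle: `a ≠ b` and `x`, `y` lie strictly on opposite sides of
the line through `a` and `b`. -/
def IsQuadrangle (a x b y : Plane) : Prop :=
  a ≠ b ∧ (affineSpan ℝ {a, b}).SOppSide x y

/-- Area of the quadrangle □axby: area(△axb) + area(△ayb). -/
noncomputable def quadArea (a x b y : Plane) : ℝ :=
  triArea a x b + triArea a y b

/-- The angle sum α(□axby) = ∠axb + ∠ayb. -/
noncomputable def quadAlpha (a x b y : Plane) : ℝ :=
  ∠ a x b + ∠ a y b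

/-- With two side lengths fixed, a strictly larger opposite side gives a strictly
larger angle at the apex (law of cosines + monotonicity of `cos` on `[0, π]`). -/
lemma angle_lt_of_dist_lt {a x b a' x' b' : Plane} (hxa : x ≠ a) (hxb : x ≠ b)
    (h1 : dist a x = dist a' x') (h2 : dist x b = dist x' b')
    (hd : dist a b < dist a' b') : ∠ a x b < ∠ a' x' b' := by
  have hp : 0 < dist a x := dist_pos.2 (Ne.symm hxa)
  have hqq : 0 < dist x b := dist_pos.2 hxb
  have lc := EuclideanGeometry.law_cos a x b
  have lc' := EuclideanGeometry.law_cos a' x' b'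
  rw [dist_comm b' x', ← h2, ← h1] at lc'
  rw [dist_comm b x] at lc
  have hd2 : dist a b * dist a b < dist a' b' * dist a' b' :=
    mul_self_lt_mul_self dist_nonneg hd
  have hcos : Real.cos (∠ a' x' b') < Real.cos (∠ a x b) := by
    nlinarith [mul_pos hp hqq]
  by_contra h
  push_neg at h
  have := Real.cos_le_cos_of_nonneg_of_le_pi (EuclideanGeometry.angle_nonneg a' x' b')
    (EuclideanGeometry.angle_le_pi a x b) h
  linarith

/-- The strict-side points of a quadrangle differ from the endpoints of its diagonal. -/
lemma quad_ne {a x b y : Plane} (h : IsQuadrangle a x b y) :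
    x ≠ a ∧ x ≠ b ∧ y ≠ a ∧ y ≠ b := by
  have ha : a ∈ affineSpan ℝ ({a, b} : Set Plane) := subset_affineSpan ℝ _ (by simp)
  have hb : b ∈ affineSpan ℝ ({a, b} : Set Plane) := subset_affineSpan ℝ _ (by simp)
  have hx := h.2.2.1
  have hy := h.2.2.2
  exact ⟨fun e => hx (e ▸ ha), fun e => hx (e ▸ hb), fun e => hy (e ▸ ha), fun e => hy (e ▸ hb)⟩

theorem quadrangle_eq_alpha_eq_diagonal
    (a x b y a' x' b' y' : Plane)
    (hq : IsQuadrangle a x b y) (hq' : IsQuadrangle a' x' b' y')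
    (hax : dist a x = dist a' x') (hxb : dist x b = dist x' b')
    (hby : dist b y = dist b' y') (hya : dist y a = dist y' a')
    (halpha : quadAlpha a x b y = quadAlpha a' x' b' y') :
    dist a b = dist a' b' := by
  obtain ⟨hxa, hxb2, hya2, hyb⟩ := quad_ne hq
  obtain ⟨hxa', hxb2', hya2', hyb'⟩ := quad_ne hq'
  have hay : dist a y = dist a' y' := by rw [dist_comm a y, dist_comm a' y']; exact hya
  have hyb3 : dist y b = dist y' b' := by rw [dist_comm y b, dist_comm y' b']; exact hby
  rcases lt_trichotomy (dist a b) (dist a' b') with h | h | h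
  · have h1 := angle_lt_of_dist_lt hxa hxb2 hax hxb h
    have h2 := angle_lt_of_dist_lt hya2 hyb hay hyb3 h
    unfold quadAlpha at halpha; linarith
  · exact h
  · have h1 := angle_lt_of_dist_lt hxa' hxb2' hax.symm hxb.symm h
    have h2 := angle_lt_of_dist_lt hya2' hyb' hay.symm hyb3.symm h
    unfold quadAlpha at halpha; linarith
end

section
/- Let □axby and □a'x'b'y' be quadrangles in the Euclidean plane with equal corresponding side lengths, i.e. dist a x = dist a' x', dist x b = dist x' b', dist b y = dist b' y', dist y a = dist y' a'. If α(□axby) = α(□a'x'b'y'), then the quadrangles are congruent: there exists an isometry f of the Euclidean plane with f a = a', f x = x', f b = b', and f y = y'. -/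
open EuclideanGeometry

/-- If the two sides at the vertex x are equal but the diagonal is shorter, the angle
at x is smaller. -/
lemma angle_lt_angle_of_dist_lt {a x b a' x' b' : Plane}
    (hxa : x ≠ a) (hxb : x ≠ b)
    (hax : dist a x = dist a' x') (hbx : dist b x = dist b' x')
    (hd : dist a b < dist a' b') : ∠ a x b < ∠ a' x' b' := by
  have h1 := EuclideanGeometry.law_cos a x b
  have h2 := EuclideanGeometry.law_cos a' x' b'
  rw [← hax, ← hbx] at h2
  have pax : 0 < dist a x := dist_pos.mpr (Ne.symm hxa)
  have pbx : 0 < dist b x := dist_pos.mpr (Ne.symm hxb)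
  have hcos : Real.cos (∠ a' x' b') < Real.cos (∠ a x b) := by
    nlinarith [dist_nonneg (x := a) (y := b), mul_pos pax pbx]
  by_contra hle
  push_neg at hle
  have := Real.strictAntiOn_cos.antitoneOn
    ⟨EuclideanGeometry.angle_nonneg a' x' b', EuclideanGeometry.angle_le_pi a' x' b'⟩
    ⟨EuclideanGeometry.angle_nonneg a x b, EuclideanGeometry.angle_le_pi a x b⟩ hle
  linarith

/-- A point not on a subspace is strictly on the opposite side from its reflection. -/
lemma sOppSide_reflection {s : AffineSubspace ℝ Plane} [Nonempty s]
    [s.direction.HasOrthogonalProjection] {p : Plane} (hp : p ∉ s) :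
    s.SOppSide p (EuclideanGeometry.reflection s p) := by
  refine ⟨⟨↑(EuclideanGeometry.orthogonalProjection s p),
      (EuclideanGeometry.orthogonalProjection s p).2,
      ↑(EuclideanGeometry.orthogonalProjection s p),
      (EuclideanGeometry.orthogonalProjection s p).2, ?_⟩, hp, fun hmem => hp ?_⟩
  · have h : (↑(EuclideanGeometry.orthogonalProjection s p) : Plane) -ᵥ
        EuclideanGeometry.reflection s p =
        p -ᵥ ↑(EuclideanGeometry.orthogonalProjection s p) := by
      rw [EuclideanGeometry.reflection_apply', vsub_vadd_eq_vsub_sub, vsub_self, zero_sub,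
        neg_vsub_eq_vsub_rev]
    rw [h]
    exact SameRay.rfl
  · have h := EuclideanGeometry.reflection_reflection s p
    rw [(EuclideanGeometry.reflection_eq_self_iff _).mpr hmem] at h
    exact h ▸ hmem

theorem quadrangle_eq_alpha_congruent
    (a x b y a' x' b' y' : Plane)
    (hq : IsQuadrangle a x b y) (hq' : IsQuadrangle a' x' b' y')
    (hax : dist a x = dist a' x') (hxb : dist x b = dist x' b')
    (hby : dist b y = dist b' y') (hya : dist y a = dist y' a')
    (halpha : quadAlpha a x b y = quadAlpha a' x' b' y') :
    ∃ f : Plane ≃ᵢ Plane, f a = a' ∧ f x = x' ∧ f b = b' ∧ f y = y' := by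
  obtain ⟨hab, hxy⟩ := hq
  obtain ⟨hab', hxy'⟩ := hq'
  have hamem : a ∈ affineSpan ℝ ({a, b} : Set Plane) :=
    subset_affineSpan ℝ _ (Set.mem_insert _ _)
  have hbmem : b ∈ affineSpan ℝ ({a, b} : Set Plane) :=
    subset_affineSpan ℝ _ (Set.mem_insert_of_mem _ rfl)
  have hamem' : a' ∈ affineSpan ℝ ({a', b'} : Set Plane) :=
    subset_affineSpan ℝ _ (Set.mem_insert _ _)
  have hbmem' : b' ∈ affineSpan ℝ ({a', b'} : Set Plane) :=
    subset_affineSpan ℝ _ (Set.mem_insert_of_mem _ rfl)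
  have hxa : x ≠ a := fun h => hxy.left_notMem (h ▸ hamem)
  have hxbne : x ≠ b := fun h => hxy.left_notMem (h ▸ hbmem)
  have hyane : y ≠ a := fun h => hxy.right_notMem (h ▸ hamem)
  have hybne : y ≠ b := fun h => hxy.right_notMem (h ▸ hbmem)
  have hxa' : x' ≠ a' := fun h => hxy'.left_notMem (h ▸ hamem')
  have hxbne' : x' ≠ b' := fun h => hxy'.left_notMem (h ▸ hbmem')
  have hyane' : y' ≠ a' := fun h => hxy'.right_notMem (h ▸ hamem')
  have hybne' : y' ≠ b' := fun h => hxy'.right_notMem (h ▸ hbmem')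
  -- convenient distances
  have hbx : dist b x = dist b' x' := by
    rw [dist_comm, dist_comm b' x']; exact hxb
  have hay : dist a y = dist a' y' := by
    rw [dist_comm, dist_comm a' y']; exact hya
  have hbyy : dist b y = dist b' y' := hby
  -- the diagonal lengths agree
  have hdab : dist a b = dist a' b' := by
    rcases lt_trichotomy (dist a b) (dist a' b') with h | h | h
    · have t1 := angle_lt_angle_of_dist_lt hxa hxbne hax hbx h
      have t2 := angle_lt_angle_of_dist_lt hyane hybne hay hby h
      rw [quadAlpha, quadAlpha] at halpha
      linarith
    · exact h
    · have t1 := angle_lt_angle_of_dist_lt hxa' hxbne' hax.symm hbx.symm h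
      have t2 := angle_lt_angle_of_dist_lt hyane' hybne' hay.symm hby.symm h
      rw [quadAlpha, quadAlpha] at halpha
      linarith
  haveI : Fact (Module.finrank ℝ Plane = 2) := ⟨finrank_euclideanSpace_fin⟩
  set o : Orientation ℝ Plane (Fin 2) := (EuclideanSpace.basisFun (Fin 2) ℝ).toBasis.orientation with ho
  set L := o.rotation (o.oangle (b -ᵥ a) (b' -ᵥ a')) with hL
  have hLba : L (b -ᵥ a) = b' -ᵥ a' := by
    rw [hL, Orientation.rotation_oangle_eq_iff_norm_eq, ← dist_eq_norm_vsub, ← dist_eq_norm_vsub,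
      dist_comm, dist_comm b' a', hdab]
  set g : Plane ≃ᵃⁱ[ℝ] Plane :=
    ((AffineIsometryEquiv.vaddConst ℝ a).symm.trans L.toAffineIsometryEquiv).trans
      (AffineIsometryEquiv.vaddConst ℝ a') with hg
  have hgdef : ∀ p, g p = L (p -ᵥ a) +ᵥ a' := fun p => rfl
  have hga : g a = a' := by rw [hgdef, vsub_self, map_zero, zero_vadd]
  have hgb : g b = b' := by rw [hgdef, hLba, vsub_vadd]
  set line' : AffineSubspace ℝ Plane := affineSpan ℝ {a', b'} with hline
  haveI : Nonempty line' := ⟨⟨a', hamem'⟩⟩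
  have hx'nm : x' ∉ line' := hxy'.left_notMem
  have hy'nm : y' ∉ line' := hxy'.right_notMem
  -- the image of the span
  have hspanmap : ∀ (h : Plane ≃ᵃⁱ[ℝ] Plane), h a = a' → h b = b' →
      (affineSpan ℝ ({a, b} : Set Plane)).map (h.toAffineEquiv : Plane →ᵃ[ℝ] Plane) = line' := by
    intro h ha hb
    rw [AffineSubspace.map_span, Set.image_insert_eq, Set.image_singleton]
    simp only [AffineEquiv.coe_coe, AffineIsometryEquiv.coe_toAffineEquiv, ha, hb]
    rfl
  -- side preservation
  have hside : ∀ (h : Plane ≃ᵃⁱ[ℝ] Plane), h a = a' → h b = b' →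
      line'.SOppSide (h x) (h y) := by
    intro h ha hb
    have := (AffineEquiv.sOppSide_map_iff (s := affineSpan ℝ ({a, b} : Set Plane))
      (x := x) (y := y) h.toAffineEquiv).mpr hxy
    rwa [hspanmap h ha hb, AffineIsometryEquiv.coe_toAffineEquiv] at this
  -- place x
  have hrx : x' ≠ EuclideanGeometry.reflection line' x' := fun h =>
    hx'nm ((EuclideanGeometry.reflection_eq_self_iff _).mp h.symm)
  have hgx : g x = x' ∨ g x = EuclideanGeometry.reflection line' x' := by
    refine EuclideanGeometry.eq_of_dist_eq_of_dist_eq_of_finrank_eq_two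
      (finrank_euclideanSpace_fin) hab' hrx (r₁ := dist x' a') (r₂ := dist x' b')
      rfl ?_ ?_ rfl ?_ ?_
    · rw [dist_comm, EuclideanGeometry.dist_reflection_eq_of_mem _ hamem', dist_comm]
    · have hh := g.dist_map x a
      rw [hga] at hh
      rw [hh, dist_comm x a, hax, dist_comm a' x']
    · rw [dist_comm, EuclideanGeometry.dist_reflection_eq_of_mem _ hbmem', dist_comm]
    · have hh := g.dist_map x b
      rw [hgb] at hh
      rw [hh, hxb]
  obtain ⟨h, hha, hhb, hhx⟩ : ∃ h : Plane ≃ᵃⁱ[ℝ] Plane, h a = a' ∧ h b = b' ∧ h x = x' := by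
    rcases hgx with h1 | h1
    · exact ⟨g, hga, hgb, h1⟩
    · refine ⟨g.trans (EuclideanGeometry.reflection line'), ?_, ?_, ?_⟩
      · show (EuclideanGeometry.reflection line') (g a) = a'
        rw [hga]
        exact (EuclideanGeometry.reflection_eq_self_iff _).mpr hamem'
      · show (EuclideanGeometry.reflection line') (g b) = b'
        rw [hgb]
        exact (EuclideanGeometry.reflection_eq_self_iff _).mpr hbmem'
      · show (EuclideanGeometry.reflection line') (g x) = x'
        rw [h1]
        exact EuclideanGeometry.reflection_reflection _ _
  -- place y
  have hry : y' ≠ EuclideanGeometry.reflection line' y' := fun h =>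
    hy'nm ((EuclideanGeometry.reflection_eq_self_iff _).mp h.symm)
  have hhy : h y = y' ∨ h y = EuclideanGeometry.reflection line' y' := by
    refine EuclideanGeometry.eq_of_dist_eq_of_dist_eq_of_finrank_eq_two
      (finrank_euclideanSpace_fin) hab' hry (r₁ := dist y' a') (r₂ := dist y' b')
      rfl ?_ ?_ rfl ?_ ?_
    · rw [dist_comm, EuclideanGeometry.dist_reflection_eq_of_mem _ hamem', dist_comm]
    · have hh := h.dist_map y a
      rw [hha] at hh
      rw [hh, hya]
    · rw [dist_comm, EuclideanGeometry.dist_reflection_eq_of_mem _ hbmem', dist_comm]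
    · have hh := h.dist_map y b
      rw [hhb] at hh
      rw [hh, dist_comm y b, hby, dist_comm b' y']
  have hyfinal : h y = y' := by
    rcases hhy with h1 | h1
    · exact h1
    · exfalso
      have hso : line'.SOppSide (h x) (h y) := hside h hha hhb
      rw [hhx, h1] at hso
      have h2 : line'.SOppSide (EuclideanGeometry.reflection line' y') y' :=
        (sOppSide_reflection hy'nm).symm
      exact hxy'.not_sSameSide (hso.trans h2)
  exact ⟨h.toIsometryEquiv, hha, hhx, hhb, hyfinal⟩
end

section
/- Let □axby and □a'x'b'y' be quadrangles in the Euclidean plane with equal corresponding side lengths, i.e. dist a x = dist a' x', dist x b = dist x' b', dist b y = dist b' y', dist y a = dist y' a'. If α(□axby) < α(□a'x'b'y') ≤ π, then area(□axby) < area(□a'x'b'y'). (The area of a quadrangle with fixed side lengths is strictly increasing in α on the range α ≤ π.) -/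
open EuclideanGeometry

private lemma not_collinear_of_not_mem {a b x : Plane} (hab : a ≠ b)
    (hx : x ∉ affineSpan ℝ ({a, b} : Set Plane)) :
    ¬ Collinear ℝ ({a, x, b} : Set Plane) := by
  intro h
  exact hx (h.mem_affineSpan_of_mem_of_ne
    (Set.mem_insert _ _) (by simp) (by simp) hab)

private lemma quad_ncol₁ {a x b y : Plane} (hq : IsQuadrangle a x b y) :
    ¬ Collinear ℝ ({a, x, b} : Set Plane) :=
  not_collinear_of_not_mem hq.1 hq.2.2.1

private lemma quad_ncol₂ {a x b y : Plane} (hq : IsQuadrangle a x b y) :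
    ¬ Collinear ℝ ({a, y, b} : Set Plane) :=
  not_collinear_of_not_mem hq.1 hq.2.2.2

private lemma tri_pos {a x b : Plane} (h : ¬ Collinear ℝ ({a, x, b} : Set Plane)) :
    0 < triArea a x b := by
  have h' := mt EuclideanGeometry.collinear_iff_eq_or_eq_or_sin_eq_zero.2 h
  push_neg at h'
  have h1 : 0 < dist x a := dist_pos.2 fun e => h'.1 e.symm
  have h2 : 0 < dist x b := dist_pos.2 fun e => h'.2.1 e.symm
  have hsin := sin_pos_of_not_collinear h
  unfold triArea
  positivity

/-- Bretschneider-style: 16·area² in terms of the sides and the angle sum. -/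
private lemma sixteen_area_sq {a x b y : Plane} (hq : IsQuadrangle a x b y) :
    16 * quadArea a x b y ^ 2 =
      4 * (dist a x * dist x b) ^ 2 + 4 * (dist b y * dist y a) ^ 2
      - (dist a x ^ 2 + dist x b ^ 2 - dist b y ^ 2 - dist y a ^ 2) ^ 2
      - 8 * (dist a x * dist x b * dist b y * dist y a) * Real.cos (quadAlpha a x b y) := by
  have lcx := EuclideanGeometry.law_cos a x b
  have lcy := EuclideanGeometry.law_cos a y b
  rw [dist_comm a x, dist_comm b x] at lcx
  rw [dist_comm a y, dist_comm b y] at lcy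
  have hC : dist x a ^ 2 + dist x b ^ 2 - dist y b ^ 2 - dist y a ^ 2
      = 2 * dist x a * dist x b * Real.cos (∠ a x b)
        - 2 * dist y a * dist y b * Real.cos (∠ a y b) := by
    linear_combination lcy - lcx
  unfold quadArea triArea quadAlpha
  rw [dist_comm a x, dist_comm b y, Real.cos_add, hC]
  linear_combination 4 * (dist x a * dist x b) ^ 2 * Real.sin_sq_add_cos_sq (∠ a x b)
    + 4 * (dist y b * dist y a) ^ 2 * Real.sin_sq_add_cos_sq (∠ a y b)

theorem quadrangle_area_strictMono_alpha_le_pi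
    (a x b y a' x' b' y' : Plane)
    (hq : IsQuadrangle a x b y) (hq' : IsQuadrangle a' x' b' y')
    (hax : dist a x = dist a' x') (hxb : dist x b = dist x' b')
    (hby : dist b y = dist b' y') (hya : dist y a = dist y' a')
    (hlt : quadAlpha a x b y < quadAlpha a' x' b' y')
    (hle : quadAlpha a' x' b' y' ≤ Real.pi) :
    quadArea a x b y < quadArea a' x' b' y' := by
  have h16 := sixteen_area_sq hq
  have h16' := sixteen_area_sq hq'
  rw [← hax, ← hxb, ← hby, ← hya] at h16'
  have hK : 0 < quadArea a x b y := by
    have := add_pos (tri_pos (quad_ncol₁ hq)) (tri_pos (quad_ncol₂ hq))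
    simpa [quadArea] using this
  have hK' : 0 < quadArea a' x' b' y' := by
    have := add_pos (tri_pos (quad_ncol₁ hq')) (tri_pos (quad_ncol₂ hq'))
    simpa [quadArea] using this
  have hα0 : 0 ≤ quadAlpha a x b y :=
    add_nonneg (EuclideanGeometry.angle_nonneg _ _ _) (EuclideanGeometry.angle_nonneg _ _ _)
  have hcos : Real.cos (quadAlpha a' x' b' y') < Real.cos (quadAlpha a x b y) :=
    Real.cos_lt_cos_of_nonneg_of_le_pi hα0 hle hlt
  have hP : 0 < dist a x * dist x b * dist b y * dist y a := by
    have h1 : x ≠ a := fun h => hq.2.2.1 (h ▸ mem_affineSpan ℝ (Set.mem_insert _ _))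
    have h2 : x ≠ b := fun h => hq.2.2.1 (h ▸ mem_affineSpan ℝ (by simp))
    have h3 : y ≠ a := fun h => hq.2.2.2 (h ▸ mem_affineSpan ℝ (Set.mem_insert _ _))
    have h4 : y ≠ b := fun h => hq.2.2.2 (h ▸ mem_affineSpan ℝ (by simp))
    have := dist_pos.2 h1; have := dist_pos.2 h2
    have := dist_pos.2 h3; have := dist_pos.2 h4
    rw [dist_comm a x, dist_comm b y]
    positivity
  nlinarith [h16, h16', hcos, hP, hK, hK', mul_pos hK hK']
end

section
/- Let □axby and □a'x'b'y' be quadrangles in the Euclidean plane with equal corresponding side lengths, i.e. dist a x = dist a' x', dist x b = dist x' b', dist b y = dist b' y', dist y a = dist y' a'. If π ≤ α(□axby) < α(□a'x'b'y'), then area(□axby) > area(□a'x'b'y'). (The area of a quadrangle with fixed side lengths is strictly decreasing in α on the range α ≥ π.) -/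
open EuclideanGeometry

lemma not_collinear_of_quad {a x b : Plane} (hab : a ≠ b)
    (hx : x ∉ affineSpan ℝ {a, b}) : ¬Collinear ℝ ({a, x, b} : Set Plane) := by
  intro h
  exact hx (h.mem_affineSpan_of_mem_of_ne
    (by simp) (by simp) (by simp) hab)

lemma quad_facts {a x b y : Plane} (hq : IsQuadrangle a x b y) :
    0 < dist x a ∧ 0 < dist x b ∧ 0 < dist y a ∧ 0 < dist y b ∧
    0 < ∠ a x b ∧ ∠ a x b < Real.pi ∧ 0 < ∠ a y b ∧ ∠ a y b < Real.pi := by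
  obtain ⟨hab, hopp⟩ := hq
  have hx := hopp.left_notMem
  have hy := hopp.right_notMem
  have hcx := not_collinear_of_quad hab hx
  have hcy := not_collinear_of_quad hab hy
  have hxa : x ≠ a := fun h => hx (h ▸ left_mem_affineSpan_pair ℝ a b)
  have hxb : x ≠ b := fun h => hx (h ▸ right_mem_affineSpan_pair ℝ a b)
  have hya : y ≠ a := fun h => hy (h ▸ left_mem_affineSpan_pair ℝ a b)
  have hyb : y ≠ b := fun h => hy (h ▸ right_mem_affineSpan_pair ℝ a b)
  exact ⟨dist_pos.2 hxa, dist_pos.2 hxb, dist_pos.2 hya, dist_pos.2 hyb,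
    angle_pos_of_not_collinear hcx, angle_lt_pi_of_not_collinear hcx,
    angle_pos_of_not_collinear hcy, angle_lt_pi_of_not_collinear hcy⟩

/-- Bretschneider-type identity. -/
lemma quad_identity (a x b y : Plane) :
    4 * quadArea a x b y ^ 2 =
      (dist x a * dist x b + dist y a * dist y b) ^ 2
        - ((dist x a ^ 2 + dist x b ^ 2 - dist y a ^ 2 - dist y b ^ 2) / 2) ^ 2
        - 4 * (dist x a * dist x b) * (dist y a * dist y b) *
            Real.cos (quadAlpha a x b y / 2) ^ 2 := by
  have h1 := EuclideanGeometry.law_cos a x b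
  have h2 := EuclideanGeometry.law_cos a y b
  rw [dist_comm a x, dist_comm b x] at h1
  rw [dist_comm a y, dist_comm b y] at h2
  have hE : dist x a ^ 2 + dist x b ^ 2 - 2 * dist x a * dist x b * Real.cos (∠ a x b)
      = dist y a ^ 2 + dist y b ^ 2 - 2 * dist y a * dist y b * Real.cos (∠ a y b) := by
    linear_combination h2 - h1
  have hs1 := Real.sin_sq_add_cos_sq (∠ a x b)
  have hs2 := Real.sin_sq_add_cos_sq (∠ a y b)
  have h2α : 2 * (quadAlpha a x b y / 2) = ∠ a x b + ∠ a y b := by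
    rw [quadAlpha]; ring
  have hhalf : Real.cos (quadAlpha a x b y / 2) ^ 2 =
      1 / 2 + Real.cos (∠ a x b + ∠ a y b) / 2 := by
    rw [Real.cos_sq, h2α]
  rw [quadArea, triArea, triArea, hhalf, Real.cos_add]
  set u := dist x a
  set v := dist x b
  set w := dist y a
  set z := dist y b
  set cx := Real.cos (∠ a x b)
  set cy := Real.cos (∠ a y b)
  linear_combination (u * v) ^ 2 * hs1 + (w * z) ^ 2 * hs2 +
    (((u ^ 2 + v ^ 2 - w ^ 2 - z ^ 2) / 2 + (u * v * cx - w * z * cy)) / 2) * hE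

set_option maxHeartbeats 1000000 in
theorem quadrangle_area_strictAnti_alpha_ge_pi
    (a x b y a' x' b' y' : Plane)
    (hq : IsQuadrangle a x b y) (hq' : IsQuadrangle a' x' b' y')
    (hax : dist a x = dist a' x') (hxb : dist x b = dist x' b')
    (hby : dist b y = dist b' y') (hya : dist y a = dist y' a')
    (hge : Real.pi ≤ quadAlpha a x b y)
    (hlt : quadAlpha a x b y < quadAlpha a' x' b' y') :
    quadArea a x b y > quadArea a' x' b' y' := by
  obtain ⟨hu, hv, hw, hz, hξ0, hξπ, hη0, hηπ⟩ := quad_facts hq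
  obtain ⟨hu', hv', hw', hz', hξ0', hξπ', hη0', hηπ'⟩ := quad_facts hq'
  have exa : dist x a = dist x' a' := by rwa [dist_comm x a, dist_comm x' a']
  have exb : dist x b = dist x' b' := hxb
  have eya : dist y a = dist y' a' := hya
  have eyb : dist y b = dist y' b' := by rwa [dist_comm b y, dist_comm b' y'] at hby
  -- areas positive
  have hA : 0 < quadArea a x b y := by
    have s1 := Real.sin_pos_of_pos_of_lt_pi hξ0 hξπ
    have s2 := Real.sin_pos_of_pos_of_lt_pi hη0 hηπ
    unfold quadArea triArea
    positivity
  have hA' : 0 < quadArea a' x' b' y' := by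
    have s1 := Real.sin_pos_of_pos_of_lt_pi hξ0' hξπ'
    have s2 := Real.sin_pos_of_pos_of_lt_pi hη0' hηπ'
    unfold quadArea triArea
    positivity
  -- cos² comparison
  have hπ : (0:ℝ) < Real.pi := Real.pi_pos
  have hα2 : quadAlpha a' x' b' y' < 2 * Real.pi := by
    unfold quadAlpha; linarith
  have hc1 : Real.cos (quadAlpha a' x' b' y' / 2) < Real.cos (quadAlpha a x b y / 2) := by
    apply Real.strictAntiOn_cos (Set.mem_Icc.2 ⟨by linarith, by linarith⟩)
      (Set.mem_Icc.2 ⟨by linarith, by linarith⟩) (by linarith)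
  have hc0 : Real.cos (quadAlpha a x b y / 2) ≤ 0 := by
    have : Real.cos (Real.pi / 2) = 0 := Real.cos_pi_div_two
    rw [← this]
    apply Real.cos_le_cos_of_nonneg_of_le_pi <;> linarith
  have hcsq : Real.cos (quadAlpha a x b y / 2) ^ 2 <
      Real.cos (quadAlpha a' x' b' y' / 2) ^ 2 := by nlinarith
  have hid := quad_identity a x b y
  have hid' := quad_identity a' x' b' y'
  rw [← exa, ← exb, ← eya, ← eyb] at hid'
  have hsq : 4 * quadArea a' x' b' y' ^ 2 < 4 * quadArea a x b y ^ 2 := by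
    have hM : 0 < 4 * (dist x a * dist x b) * (dist y a * dist y b) := by positivity
    have h3 := mul_lt_mul_of_pos_left hcsq hM
    linarith [hid, hid', h3]
  nlinarith [hsq, hA, hA', sq_nonneg (quadArea a x b y - quadArea a' x' b' y')]
end

section
/- Let □axby and □a'x'b'y' be quadrangles in the Euclidean plane with equal corresponding side lengths, i.e. dist a x = dist a' x', dist x b = dist x' b', dist b y = dist b' y', dist y a = dist y' a'. If α(□a'x'b'y') = π (i.e. □a'x'b'y' is inscribed in a circle), then area(□axby) ≤ area(□a'x'b'y'). In other words, among all quadrangles with given side lengths, the one with α = π has maximal area. -/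
open EuclideanGeometry

private lemma key_ineq (u v a1 a2 b1 b2 : ℝ) (hu : 0 ≤ u) (hv : 0 ≤ v)
    (hs1 : 0 ≤ Real.sin a1) (hs2 : 0 ≤ Real.sin a2)
    (hs3 : 0 ≤ Real.sin b1)
    (hb : b1 + b2 = Real.pi)
    (hc : u * Real.cos a1 - v * Real.cos a2 = u * Real.cos b1 - v * Real.cos b2) :
    u * Real.sin a1 + v * Real.sin a2 ≤ u * Real.sin b1 + v * Real.sin b2 := by
  have hb2 : b2 = Real.pi - b1 := by linarith
  subst hb2
  rw [Real.cos_pi_sub] at hc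
  rw [Real.sin_pi_sub]
  have h1 : Real.sin a1 ^ 2 + Real.cos a1 ^ 2 = 1 := Real.sin_sq_add_cos_sq a1
  have h2 : Real.sin a2 ^ 2 + Real.cos a2 ^ 2 = 1 := Real.sin_sq_add_cos_sq a2
  have h3 : Real.sin b1 ^ 2 + Real.cos b1 ^ 2 = 1 := Real.sin_sq_add_cos_sq b1
  have hcos : Real.cos a1 * Real.cos a2 - Real.sin a1 * Real.sin a2 ≥ -1 := by
    have := Real.neg_one_le_cos (a1 + a2)
    rw [Real.cos_add] at this; linarith
  have hC : u * Real.cos a1 - v * Real.cos a2 = (u + v) * Real.cos b1 := by linarith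
  have hR2 : (u * Real.sin b1 + v * Real.sin b1) ^ 2 + ((u + v) * Real.cos b1) ^ 2
      = (u + v) ^ 2 := by nlinarith [h3]
  have hL2 : (u * Real.sin a1 + v * Real.sin a2) ^ 2 + (u * Real.cos a1 - v * Real.cos a2) ^ 2
      ≤ (u + v) ^ 2 := by
    have hprod : 0 ≤ (u * v) * (1 + (Real.cos a1 * Real.cos a2 - Real.sin a1 * Real.sin a2)) :=
      mul_nonneg (mul_nonneg hu hv) (by linarith)
    have expand : (u * Real.sin a1 + v * Real.sin a2) ^ 2
        + (u * Real.cos a1 - v * Real.cos a2) ^ 2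
        = u ^ 2 + v ^ 2 - 2 * (u * v) * (Real.cos a1 * Real.cos a2 - Real.sin a1 * Real.sin a2) := by
      linear_combination u ^ 2 * h1 + v ^ 2 * h2
    nlinarith [hprod, expand]
  have hsq : (u * Real.sin a1 + v * Real.sin a2) ^ 2
      ≤ (u * Real.sin b1 + v * Real.sin b1) ^ 2 := by
    rw [hC] at hL2; linarith
  have hL : 0 ≤ u * Real.sin a1 + v * Real.sin a2 := by positivity
  have hR : 0 ≤ u * Real.sin b1 + v * Real.sin b1 := by positivity
  nlinarith [hsq, hL, hR]

theorem quadrangle_area_max_of_alpha_eq_pi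
    (a x b y a' x' b' y' : Plane)
    (hq : IsQuadrangle a x b y) (hq' : IsQuadrangle a' x' b' y')
    (hax : dist a x = dist a' x') (hxb : dist x b = dist x' b')
    (hby : dist b y = dist b' y') (hya : dist y a = dist y' a')
    (hpi : quadAlpha a' x' b' y' = Real.pi) :
    quadArea a x b y ≤ quadArea a' x' b' y' := by
  have lc1 := EuclideanGeometry.law_cos a x b
  have lc2 := EuclideanGeometry.law_cos a y b
  have lc1' := EuclideanGeometry.law_cos a' x' b'
  have lc2' := EuclideanGeometry.law_cos a' y' b'
  have d1 : dist b x = dist b' x' := by rw [dist_comm b x, dist_comm b' x', hxb]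
  have d2 : dist a y = dist a' y' := by rw [dist_comm a y, dist_comm a' y', hya]
  rw [hax, d1] at lc1
  rw [d2, hby] at lc2
  have sinnn : ∀ p q r : Plane, 0 ≤ Real.sin (∠ p q r) := fun p q r =>
    Real.sin_nonneg_of_nonneg_of_le_pi (EuclideanGeometry.angle_nonneg p q r)
      (EuclideanGeometry.angle_le_pi p q r)
  have hc : dist a' x' * dist b' x' * Real.cos (∠ a x b)
      - dist a' y' * dist b' y' * Real.cos (∠ a y b)
      = dist a' x' * dist b' x' * Real.cos (∠ a' x' b')
      - dist a' y' * dist b' y' * Real.cos (∠ a' y' b') := by linarith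
  have key := key_ineq (dist a' x' * dist b' x') (dist a' y' * dist b' y')
    (∠ a x b) (∠ a y b) (∠ a' x' b') (∠ a' y' b')
    (by positivity) (by positivity) (sinnn a x b) (sinnn a y b) (sinnn a' x' b') hpi hc
  simp only [quadArea, triArea]
  have e1 : dist x a = dist a' x' := by rw [dist_comm x a, hax]
  have e2 : dist x b = dist b' x' := by rw [dist_comm b' x', hxb]
  have e3 : dist y a = dist a' y' := by rw [hya, dist_comm y' a']
  have e4 : dist y b = dist b' y' := by rw [dist_comm y b, hby, dist_comm b' y']
  have e1' : dist x' a' = dist a' x' := dist_comm x' a'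
  have e2' : dist x' b' = dist b' x' := dist_comm x' b'
  have e3' : dist y' a' = dist a' y' := dist_comm y' a'
  have e4' : dist y' b' = dist b' y' := dist_comm y' b'
  rw [e1, e2, e3, e4, e1', e2', e3', e4']
  linarith [key]
end

section
/- Let □axby and □a'x'b'y' be quadrangles in the Euclidean plane with equal corresponding side lengths, i.e. dist a x = dist a' x', dist x b = dist x' b', dist b y = dist b' y', dist y a = dist y' a'. Assume dist a b ≤ dist a' b' and assume that in □a'x'b'y' the sum of the four angles adjacent to the diagonal [a'b'] satisfies ∠x'a'b' + ∠y'a'b' + ∠x'b'a' + ∠y'b'a' ≥ π. Then area(□axby) ≤ area(□a'x'b'y'). (With the four side lengths fixed, the area is nondecreasing in the length of the diagonal as long as the four adjacent angles sum to at least π.) -/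
open EuclideanGeometry

/-- In a quadrangle, `x` is not collinear with `a` and `b`. -/
lemma IsQuadrangle.not_collinear_left {a x b y : Plane} (h : IsQuadrangle a x b y) :
    ¬Collinear ℝ ({a, x, b} : Set Plane) := by
  intro hc
  exact h.2.2.1 (hc.mem_affineSpan_of_mem_of_ne (by simp) (by simp) (by simp) h.1)

/-- In a quadrangle, `y` is not collinear with `a` and `b`. -/
lemma IsQuadrangle.not_collinear_right {a x b y : Plane} (h : IsQuadrangle a x b y) :
    ¬Collinear ℝ ({a, y, b} : Set Plane) := by
  intro hc
  exact h.2.2.2 (hc.mem_affineSpan_of_mem_of_ne (by simp) (by simp) (by simp) h.1)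

/-- One triangle step: with sides `p, q` fixed, `2 p q c = p² + q² - u` (law of cosines with
squared diagonal `u`), the area `p q s / 2` satisfies a supporting-line bound at `u'`. -/
lemma tri_step {p q u u' c s c' s' : ℝ} (hpq : 0 < p * q)
    (h1 : c ^ 2 + s ^ 2 = 1) (h1' : c' ^ 2 + s' ^ 2 = 1)
    (e : 2 * (p * q) * c = p ^ 2 + q ^ 2 - u)
    (e' : 2 * (p * q) * c' = p ^ 2 + q ^ 2 - u') :
    2 * s' * (p * q * s) ≤ 2 * (p * q) * s' ^ 2 - c' * (u' - u) := by
  have hcs : s * s' + c * c' ≤ 1 := by nlinarith [sq_nonneg (s - s'), sq_nonneg (c - c')]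
  have h2 : 2 * (p * q) * (s * s' + c * c') ≤ 2 * (p * q) * 1 :=
    mul_le_mul_of_nonneg_left hcs (by positivity)
  have e3 : u' - u = 2 * (p * q) * (c - c') := by linarith
  have heq : 2 * (p * q) * s' ^ 2 - c' * (u' - u) = 2 * (p * q) - 2 * (p * q) * (c * c') := by
    rw [e3]; linear_combination 2 * (p * q) * h1'
  nlinarith [h2, heq]

set_option maxHeartbeats 1600000 in
theorem quadrangle_area_mono_in_diagonal
    (a x b y a' x' b' y' : Plane)
    (hq : IsQuadrangle a x b y) (hq' : IsQuadrangle a' x' b' y')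
    (hax : dist a x = dist a' x') (hxb : dist x b = dist x' b')
    (hby : dist b y = dist b' y') (hya : dist y a = dist y' a')
    (hdiag : dist a b ≤ dist a' b')
    (hangles : ∠ x' a' b' + ∠ y' a' b' + ∠ x' b' a' + ∠ y' b' a' ≥ Real.pi) :
    quadArea a x b y ≤ quadArea a' x' b' y' := by
  have hncx := hq.not_collinear_left
  have hncy := hq.not_collinear_right
  have hncx' := hq'.not_collinear_left
  have hncy' := hq'.not_collinear_right
  -- distances
  have hxa : x ≠ a := fun h => hncx (by rw [h]; simp [collinear_pair])
  have hxb2 : x ≠ b := fun h => hncx (by rw [h]; exact (collinear_pair ℝ a b).subset (by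
    intro z hz; rcases hz with h | h | h <;> simp [h]))
  have hya2 : y ≠ a := fun h => hncy (by rw [h]; simp [collinear_pair])
  have hyb2 : y ≠ b := fun h => hncy (by rw [h]; exact (collinear_pair ℝ a b).subset (by
    intro z hz; rcases hz with h | h | h <;> simp [h]))
  have hxa' : x' ≠ a' := fun h => hncx' (by rw [h]; simp [collinear_pair])
  have hxb2' : x' ≠ b' := fun h => hncx' (by rw [h]; exact (collinear_pair ℝ a' b').subset (by
    intro z hz; rcases hz with h | h | h <;> simp [h]))
  have hya2' : y' ≠ a' := fun h => hncy' (by rw [h]; simp [collinear_pair])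
  have hyb2' : y' ≠ b' := fun h => hncy' (by rw [h]; exact (collinear_pair ℝ a' b').subset (by
    intro z hz; rcases hz with h | h | h <;> simp [h]))
  have hp : 0 < dist x a := dist_pos.2 hxa
  have hqd : 0 < dist x b := dist_pos.2 hxb2
  have hr : 0 < dist y a := dist_pos.2 hya2
  have hsd : 0 < dist y b := dist_pos.2 hyb2
  -- sines positive
  have hs1 : 0 < Real.sin (∠ a x b) := sin_pos_of_not_collinear hncx
  have hs2 : 0 < Real.sin (∠ a y b) := sin_pos_of_not_collinear hncy
  have hs1' : 0 < Real.sin (∠ a' x' b') := sin_pos_of_not_collinear hncx'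
  have hs2' : 0 < Real.sin (∠ a' y' b') := sin_pos_of_not_collinear hncy'
  -- angle sum condition : ∠ a' x' b' + ∠ a' y' b' ≤ π
  have tx : ∠ x' a' b' + ∠ a' b' x' + ∠ b' x' a' = Real.pi :=
    angle_add_angle_add_angle_eq_pi b' (Ne.symm hxa')
  have ty : ∠ y' a' b' + ∠ a' b' y' + ∠ b' y' a' = Real.pi :=
    angle_add_angle_add_angle_eq_pi b' (Ne.symm hya2')
  rw [angle_comm a' b' x'] at tx
  rw [angle_comm a' b' y'] at ty
  rw [angle_comm b' x' a'] at tx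
  rw [angle_comm b' y' a'] at ty
  have hsum : ∠ a' x' b' + ∠ a' y' b' ≤ Real.pi := by linarith
  have hsumpos : 0 ≤ ∠ a' x' b' + ∠ a' y' b' :=
    add_nonneg (angle_nonneg _ _ _) (angle_nonneg _ _ _)
  have hsin : 0 ≤ Real.sin (∠ a' x' b') * Real.cos (∠ a' y' b') +
      Real.cos (∠ a' x' b') * Real.sin (∠ a' y' b') := by
    have := Real.sin_nonneg_of_nonneg_of_le_pi hsumpos hsum
    rwa [Real.sin_add] at this
  -- law of cosines
  have lcx := EuclideanGeometry.law_cos a x b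
  have lcy := EuclideanGeometry.law_cos a y b
  have lcx' := EuclideanGeometry.law_cos a' x' b'
  have lcy' := EuclideanGeometry.law_cos a' y' b'
  -- squared diagonals
  have hu : dist a b * dist a b ≤ dist a' b' * dist a' b' :=
    mul_le_mul hdiag hdiag dist_nonneg dist_nonneg
  -- rewrite primed distances
  have Hxa' : dist x' a' = dist x a := by rw [dist_comm x' a', ← hax, dist_comm a x]
  have Hxb' : dist x' b' = dist x b := by rw [← hxb]
  have Hya' : dist y' a' = dist y a := by rw [← hya]
  have Hyb' : dist y' b' = dist y b := by rw [dist_comm y' b', ← hby, dist_comm b y]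
  -- set up the algebraic step
  have key1 := tri_step (p := dist x a) (q := dist x b)
    (u := dist a b * dist a b) (u' := dist a' b' * dist a' b')
    (c := Real.cos (∠ a x b)) (s := Real.sin (∠ a x b))
    (c' := Real.cos (∠ a' x' b')) (s' := Real.sin (∠ a' x' b'))
    (mul_pos hp hqd)
    (by rw [← Real.sin_sq_add_cos_sq (∠ a x b)]; ring)
    (by rw [← Real.sin_sq_add_cos_sq (∠ a' x' b')]; ring)
    (by rw [dist_comm a x, dist_comm b x] at lcx; linear_combination lcx)
    (by rw [dist_comm a' x', Hxa', dist_comm b' x', Hxb'] at lcx'; linear_combination lcx')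
  have key2 := tri_step (p := dist y a) (q := dist y b)
    (u := dist a b * dist a b) (u' := dist a' b' * dist a' b')
    (c := Real.cos (∠ a y b)) (s := Real.sin (∠ a y b))
    (c' := Real.cos (∠ a' y' b')) (s' := Real.sin (∠ a' y' b'))
    (mul_pos hr hsd)
    (by rw [← Real.sin_sq_add_cos_sq (∠ a y b)]; ring)
    (by rw [← Real.sin_sq_add_cos_sq (∠ a' y' b')]; ring)
    (by rw [dist_comm a y, dist_comm b y] at lcy; linear_combination lcy)
    (by rw [dist_comm a' y', Hya', dist_comm b' y', Hyb'] at lcy'; linear_combination lcy')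
  -- conclude
  unfold quadArea triArea
  rw [Hxa', Hxb', Hya', Hyb']
  have hD : 0 ≤ dist a' b' * dist a' b' - dist a b * dist a b := by linarith
  nlinarith [mul_le_mul_of_nonneg_right key1 hs2'.le,
    mul_le_mul_of_nonneg_right key2 hs1'.le,
    mul_nonneg hD hsin, mul_pos hs1' hs2',
    mul_pos (mul_pos hp hqd) hs1, mul_pos (mul_pos hr hsd) hs2]
end

section
/- Let a, b, x, y be points in Euclidean 3-space with x ≠ a, y ≠ a, b ≠ a, and ∠xay < π. Then ∠xab + ∠bay = ∠xay if and only if there exist real numbers s ≥ 0 and t ≥ 0 with b − a = s•(x − a) + t•(y − a); i.e., equality in the triangle inequality for angles at a holds exactly when the direction of b − a lies in the convex cone spanned by x − a and y − a. -/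
open EuclideanGeometry

/-- Euclidean 3-space ℝ³. -/
abbrev Space3 := EuclideanSpace ℝ (Fin 3)

/-- Area of the triangle △pqr, with the angle taken at the middle vertex q. -/
noncomputable def triArea3 (p q r : Space3) : ℝ :=
  1 / 2 * dist q p * dist q r * Real.sin (∠ p q r)

namespace InnerProductGeometry

open Real RealInnerProductSpace in
lemma core_angle_cone {u v w : Space3} (hu : ‖u‖ = 1) (hv : ‖v‖ = 1) (hw : ‖w‖ = 1)
    (hγ : angle u v < π) :
    angle u w + angle w v = angle u v ↔
      ∃ s t : ℝ, 0 ≤ s ∧ 0 ≤ t ∧ w = s • u + t • v := by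
  set α := angle u w with hα
  set β := angle w v with hβ
  set γ := angle u v with hγdef
  set c : ℝ := ⟪u, v⟫ with hc
  have huu : ⟪u, u⟫ = 1 := by rw [real_inner_self_eq_norm_sq, hu]; norm_num
  have hvv : ⟪v, v⟫ = 1 := by rw [real_inner_self_eq_norm_sq, hv]; norm_num
  have hww : ⟪w, w⟫ = 1 := by rw [real_inner_self_eq_norm_sq, hw]; norm_num
  have hca : Real.cos α = ⟪u, w⟫ := by rw [hα, cos_angle, hu, hw]; simp
  have hcb : Real.cos β = ⟪w, v⟫ := by rw [hβ, cos_angle, hw, hv]; simp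
  have hcg : Real.cos γ = c := by rw [hγdef, cos_angle, hu, hv]; simp [hc]
  have hα0 : 0 ≤ α := angle_nonneg u w
  have hαpi : α ≤ π := angle_le_pi u w
  have hβ0 : 0 ≤ β := angle_nonneg w v
  have hβpi : β ≤ π := angle_le_pi w v
  have hγ0 : 0 ≤ γ := angle_nonneg u v
  have hγpi : γ ≤ π := angle_le_pi u v
  have hcneg : -1 < c := by
    rw [← hcg, ← Real.cos_pi]
    exact Real.strictAntiOn_cos ⟨hγ0, hγpi⟩ ⟨le_of_lt Real.pi_pos, le_refl _⟩ hγ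
  have hc1 : c ≤ 1 := by rw [← hcg]; exact Real.cos_le_one γ
  have hd0 : (0:ℝ) ≤ 1 - c ^ 2 := by
    have h' : 1 - c ^ 2 = (1 - c) * (1 + c) := by ring
    rw [h']; exact mul_nonneg (by linarith) (by linarith)
  constructor
  · -- forward: angle additivity implies cone membership
    intro h
    rcases eq_or_lt_of_le hγ0 with h0 | h0
    · -- γ = 0
      have hα_eq : α = 0 := by linarith
      rw [hα, angle_eq_zero_iff] at hα_eq
      obtain ⟨-, r, hr, hwr⟩ := hα_eq
      exact ⟨r, 0, le_of_lt hr, le_refl 0, by simp [hwr]⟩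
    · -- 0 < γ
      have hclt : c < 1 := by
        rw [← hcg, ← Real.cos_zero]
        exact Real.strictAntiOn_cos ⟨le_refl 0, le_of_lt Real.pi_pos⟩ ⟨hγ0, hγpi⟩ h0
      have hd : (0:ℝ) < 1 - c ^ 2 := by
        have h' : 1 - c ^ 2 = (1 - c) * (1 + c) := by ring
        rw [h']; exact mul_pos (by linarith) (by linarith)
      set ca := Real.cos α with hcadef
      set cb := Real.cos β with hcbdef
      have hsa0 : 0 ≤ Real.sin α := Real.sin_nonneg_of_nonneg_of_le_pi hα0 hαpi
      have hsb0 : 0 ≤ Real.sin β := Real.sin_nonneg_of_nonneg_of_le_pi hβ0 hβpi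
      have hsg0 : 0 ≤ Real.sin γ := Real.sin_nonneg_of_nonneg_of_le_pi hγ0 hγpi
      set s : ℝ := (ca - c * cb) / (1 - c ^ 2) with hsdef
      set t : ℝ := (cb - c * ca) / (1 - c ^ 2) with htdef
      have hcacb : ca - c * cb = Real.sin γ * Real.sin β := by
        have : α = γ - β := by linarith
        rw [hcadef, this, Real.cos_sub, ← hcg]; ring
      have hcbca : cb - c * ca = Real.sin γ * Real.sin α := by
        have : β = γ - α := by linarith
        rw [hcbdef, this, Real.cos_sub, ← hcg]; ring
      have hs : 0 ≤ s := div_nonneg (by rw [hcacb]; exact mul_nonneg hsg0 hsb0) (le_of_lt hd)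
      have ht : 0 ≤ t := div_nonneg (by rw [hcbca]; exact mul_nonneg hsg0 hsa0) (le_of_lt hd)
      have hcadd : c = ca * cb - Real.sin α * Real.sin β := by
        rw [← hcg, ← h, Real.cos_add]
      have hsa2 : Real.sin α ^ 2 = 1 - ca ^ 2 := by
        have := Real.sin_sq_add_cos_sq α; rw [← hcadef] at this; linarith
      have hsb2 : Real.sin β ^ 2 = 1 - cb ^ 2 := by
        have := Real.sin_sq_add_cos_sq β; rw [← hcbdef] at this; linarith
      -- key scalar identities
      have hkey1 : s + t * c = ca := by
        rw [hsdef, htdef]; field_simp; ring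
      have hkey2 : s * c + t = cb := by
        rw [hsdef, htdef]; field_simp; ring
      have hkey3 : s * ca + t * cb = 1 := by
        rw [hsdef, htdef]
        rw [div_mul_eq_mul_div, div_mul_eq_mul_div, ← add_div, div_eq_one_iff_eq (ne_of_gt hd)]
        rw [hcadd]
        linear_combination (Real.sin β ^ 2) * hsa2 + (1 - ca ^ 2) * hsb2
      -- inner products of w₀ := s•u + t•v
      have hiu : ⟪u, s • u + t • v⟫ = ca := by
        rw [inner_add_right, real_inner_smul_right, real_inner_smul_right, huu, ← hc, ← hkey1]; ring
      have hiv : ⟪v, s • u + t • v⟫ = cb := by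
        rw [inner_add_right, real_inner_smul_right, real_inner_smul_right, hvv, real_inner_comm, ← hc, ← hkey2]; ring
      have hi00 : ⟪s • u + t • v, s • u + t • v⟫ = 1 := by
        rw [inner_add_left, real_inner_smul_left, real_inner_smul_left, hiu, hiv, hkey3]
      have hiw0 : ⟪w, s • u + t • v⟫ = 1 := by
        rw [inner_add_right, real_inner_smul_right, real_inner_smul_right,
          real_inner_comm u w, ← hca, ← hcb, hkey3]
      have hzero : ⟪w - (s • u + t • v), w - (s • u + t • v)⟫ = 0 := by
        rw [inner_sub_left, inner_sub_right, inner_sub_right, hww, hi00, hiw0,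
          real_inner_comm w (s • u + t • v), hiw0]
        ring
      have : w - (s • u + t • v) = 0 := by
        exact inner_self_eq_zero.mp hzero
      exact ⟨s, t, hs, ht, by rw [← sub_eq_zero]; exact this⟩
  · -- backward: cone membership implies angle additivity
    rintro ⟨s, t, hs, ht, hweq⟩
    have h1 : ⟪u, w⟫ = s + t * c := by
      rw [hweq, inner_add_right, real_inner_smul_right, real_inner_smul_right, huu, ← hc]; ring
    have h2 : ⟪w, v⟫ = s * c + t := by
      rw [hweq, inner_add_left, real_inner_smul_left, real_inner_smul_left, hvv, ← hc]; ring
    have h3 : s ^ 2 + 2 * s * t * c + t ^ 2 = 1 := by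
      have h := hww
      rw [hweq] at h
      simp only [inner_add_left, inner_add_right, real_inner_smul_left,
        real_inner_smul_right, huu, hvv, real_inner_comm u v, ← hc] at h
      linear_combination h
    have hca' : Real.cos α = s + t * c := by rw [hca, h1]
    have hcb' : Real.cos β = s * c + t := by rw [hcb, h2]
    have hsqd : Real.sqrt (1 - c ^ 2) * Real.sqrt (1 - c ^ 2) = 1 - c ^ 2 :=
      Real.mul_self_sqrt hd0
    have hsa : Real.sin α = t * Real.sqrt (1 - c ^ 2) := by
      rw [Real.sin_eq_sqrt_one_sub_cos_sq hα0 hαpi, hca']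
      rw [show 1 - (s + t * c) ^ 2 = t ^ 2 * (1 - c ^ 2) by linear_combination -h3]
      rw [Real.sqrt_mul (sq_nonneg t), Real.sqrt_sq ht]
    have hsb : Real.sin β = s * Real.sqrt (1 - c ^ 2) := by
      rw [Real.sin_eq_sqrt_one_sub_cos_sq hβ0 hβpi, hcb']
      rw [show 1 - (s * c + t) ^ 2 = s ^ 2 * (1 - c ^ 2) by linear_combination -h3]
      rw [Real.sqrt_mul (sq_nonneg s), Real.sqrt_sq hs]
    have hcosadd : Real.cos (α + β) = c := by
      rw [Real.cos_add, hca', hcb', hsa, hsb]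
      linear_combination c * h3 - s * t * hsqd
    have hsinadd : Real.sin (α + β) = Real.sqrt (1 - c ^ 2) := by
      rw [Real.sin_add, hca', hcb', hsa, hsb]
      linear_combination Real.sqrt (1 - c ^ 2) * h3
    have hsum_le : α + β ≤ π := by
      by_contra hcon
      push_neg at hcon
      rcases lt_or_eq_of_le (show α + β ≤ 2 * π by linarith) with h2pi | h2pi
      · have hneg : Real.sin (α + β) < 0 := by
          have h' : 0 < Real.sin (α + β - π) :=
            Real.sin_pos_of_pos_of_lt_pi (by linarith) (by linarith)
          rw [Real.sin_sub_pi] at h'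
          linarith
        have : (0:ℝ) ≤ Real.sqrt (1 - c ^ 2) := Real.sqrt_nonneg _
        linarith [hsinadd ▸ hneg]
      · have hαπ : α = π := by linarith
        have hβπ : β = π := by linarith
        have hca'' : Real.cos α = -1 := by rw [hαπ, Real.cos_pi]
        have hsa'' : Real.sin α = 0 := by rw [hαπ, Real.sin_pi]
        have hsb'' : Real.sin β = 0 := by rw [hβπ, Real.sin_pi]
        rcases eq_or_lt_of_le (Real.sqrt_nonneg (1 - c ^ 2)) with hq | hq
        · -- sqrt = 0 so c = 1
          have : 1 - c ^ 2 = 0 := by rw [← hsqd, ← hq]; ring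
          have hc1' : c = 1 := by
            rcases mul_eq_zero.mp (show (1 - c) * (1 + c) = 0 by linear_combination this) with h' | h'
            · linarith
            · linarith
          rw [hca'', hc1'] at hca'
          linarith
        · have hst : t = 0 := by
            have := hsa'' ▸ hsa
            rcases mul_eq_zero.mp this.symm with h' | h'
            · exact h'
            · linarith
          have hss : s = 0 := by
            have := hsb'' ▸ hsb
            rcases mul_eq_zero.mp this.symm with h' | h'
            · exact h'
            · linarith
          rw [hst, hss] at h3; norm_num at h3
    have : Real.cos (α + β) = Real.cos γ := by rw [hcosadd, hcg]
    exact Real.injOn_cos ⟨by positivity, hsum_le⟩ ⟨hγ0, hγpi⟩ this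

end InnerProductGeometry

theorem angle_triangle_inequality_eq_iff
    (a b x y : Space3) (hx : x ≠ a) (hy : y ≠ a) (hb : b ≠ a)
    (hxy : ∠ x a y < Real.pi) :
    ∠ x a b + ∠ b a y = ∠ x a y ↔
      ∃ s t : ℝ, 0 ≤ s ∧ 0 ≤ t ∧ b - a = s • (x - a) + t • (y - a) := by
  have hEA : ∀ p q r : Space3, ∠ p q r = InnerProductGeometry.angle (p - q) (r - q) := by
    intro p q r
    rw [EuclideanGeometry.angle, vsub_eq_sub, vsub_eq_sub]
  set u := x - a with hudef
  set v := y - a with hvdef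
  set w := b - a with hwdef
  have hu0 : u ≠ 0 := sub_ne_zero.mpr hx
  have hv0 : v ≠ 0 := sub_ne_zero.mpr hy
  have hw0 : w ≠ 0 := sub_ne_zero.mpr hb
  have hnu : (0:ℝ) < ‖u‖ := norm_pos_iff.mpr hu0
  have hnv : (0:ℝ) < ‖v‖ := norm_pos_iff.mpr hv0
  have hnw : (0:ℝ) < ‖w‖ := norm_pos_iff.mpr hw0
  set u' : Space3 := ‖u‖⁻¹ • u with hu'def
  set v' : Space3 := ‖v‖⁻¹ • v with hv'def
  set w' : Space3 := ‖w‖⁻¹ • w with hw'def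
  have hu'1 : ‖u'‖ = 1 := by
    rw [hu'def, norm_smul, norm_inv, norm_norm, inv_mul_cancel₀ (ne_of_gt hnu)]
  have hv'1 : ‖v'‖ = 1 := by
    rw [hv'def, norm_smul, norm_inv, norm_norm, inv_mul_cancel₀ (ne_of_gt hnv)]
  have hw'1 : ‖w'‖ = 1 := by
    rw [hw'def, norm_smul, norm_inv, norm_norm, inv_mul_cancel₀ (ne_of_gt hnw)]
  have ha1 : InnerProductGeometry.angle u' w' = ∠ x a b := by
    rw [hEA, hu'def, hw'def, InnerProductGeometry.angle_smul_left_of_pos _ _ (inv_pos.mpr hnu),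
      InnerProductGeometry.angle_smul_right_of_pos _ _ (inv_pos.mpr hnw)]
  have ha2 : InnerProductGeometry.angle w' v' = ∠ b a y := by
    rw [hEA, hw'def, hv'def, InnerProductGeometry.angle_smul_left_of_pos _ _ (inv_pos.mpr hnw),
      InnerProductGeometry.angle_smul_right_of_pos _ _ (inv_pos.mpr hnv)]
  have ha3 : InnerProductGeometry.angle u' v' = ∠ x a y := by
    rw [hEA, hu'def, hv'def, InnerProductGeometry.angle_smul_left_of_pos _ _ (inv_pos.mpr hnu),
      InnerProductGeometry.angle_smul_right_of_pos _ _ (inv_pos.mpr hnv)]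
  have hiff := InnerProductGeometry.core_angle_cone hu'1 hv'1 hw'1 (by rw [ha3]; exact hxy)
  rw [ha1, ha2, ha3] at hiff
  rw [hiff]
  constructor
  · rintro ⟨s, t, hs, ht, h⟩
    refine ⟨‖w‖ * s * ‖u‖⁻¹, ‖w‖ * t * ‖v‖⁻¹, by positivity, by positivity, ?_⟩
    have hww : w = ‖w‖ • w' := by
      rw [hw'def, smul_smul, mul_inv_cancel₀ (ne_of_gt hnw), one_smul]
    conv_lhs => rw [hww, h]
    rw [hu'def, hv'def]
    match_scalars <;> ring
  · rintro ⟨s, t, hs, ht, h⟩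
    refine ⟨‖w‖⁻¹ * s * ‖u‖, ‖w‖⁻¹ * t * ‖v‖, by positivity, by positivity, ?_⟩
    rw [hw'def]
    nth_rewrite 2 [h]
    rw [hu'def, hv'def]
    match_scalars <;> field_simp <;> ring
end
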